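/- Let φ: (A,C) → (A',C') be a surjective morphism of preordered abelian groups with C = φ⁻¹(C'). Then for any pair of subsets K₁, K₂ ⊆ A, φ(K̃₁ ∩ K̃₂)~ = φ(K₁)~ ∩ φ(K₂)~, where for S ⊆ A (resp. A'), S̃ denotes the up-closure {λ : λ ≥ μ for some μ ∈ S} with respect to C (resp. C'). -/

import Mathlib

section MultifiltrationDefs

variable {A : Type*} [AddCommGroup A]

/-- The up-closure `K̃ = {λ | ∃ μ ∈ K, μ ≤ λ}` of a subset with respect to the
preorder defined by the submonoid `C`. -/
def mfTilde (C : AddSubmonoid A) (K : Set A) : Set A := {l : A | ∃ m ∈ K, l - m ∈ C}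

variable {k E : Type*} [Field k] [AddCommGroup E] [Module k E]

/-- `F` is a decreasing multifiltration indexed by `(A, C)`. -/
def mfIsFilt (C : AddSubmonoid A) (F : A → Submodule k E) : Prop :=
  ∀ l m : A, m - l ∈ C → F m ≤ F l

/-- Exhaustive: `E = Σ_λ F^λ E`. -/
def mfExhaustive (F : A → Submodule k E) : Prop := (⨆ l, F l) = ⊤

/-- `F^K E = Σ_{λ ∈ K} F^λ E`. -/
def mfPiece (F : A → Submodule k E) (K : Set A) : Submodule k E := ⨆ l ∈ K, F l

/-- Separated: for each family of subsets whose up-closures have empty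
intersection, the intersection of the corresponding pieces is zero. -/
def mfSeparated (C : AddSubmonoid A) (F : A → Submodule k E) : Prop :=
  ∀ 𝒦 : Set (Set A), (⋂ K ∈ 𝒦, mfTilde C K) = ∅ → (⨅ K ∈ 𝒦, mfPiece F K) = ⊥

/-- Chain-separated: every infinite strictly increasing chain `λ₁ < λ₂ < ⋯`
(`λ < μ` meaning `μ - λ ∈ C` and `λ - μ ∉ C`) eventually has `F^{λᵢ} E = 0`. -/
def mfChainSeparated (C : AddSubmonoid A) (F : A → Submodule k E) : Prop :=
  ∀ l : ℕ → A, (∀ i, l (i + 1) - l i ∈ C ∧ l i - l (i + 1) ∉ C) →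
    ∃ i₀ : ℕ, ∀ i ≥ i₀, F (l i) = ⊥

/-- Regular: `F^{K₁}E ∩ F^{K₂}E = F^{K̃₁ ∩ K̃₂}E` for all subsets `K₁, K₂`. -/
def mfRegular (C : AddSubmonoid A) (F : A → Submodule k E) : Prop :=
  ∀ K₁ K₂ : Set A, mfPiece F K₁ ⊓ mfPiece F K₂ = mfPiece F (mfTilde C K₁ ∩ mfTilde C K₂)

/-- `λ` is a jump point: `F^λ E` strictly contains `Σ_{μ > λ} F^μ E`. -/
def mfJump (C : AddSubmonoid A) (F : A → Submodule k E) (l : A) : Prop :=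
  ¬ F l ≤ ⨆ (m : A) (_ : m - l ∈ C ∧ l - m ∉ C), F m

end MultifiltrationDefs

section IndRes

variable {A A' : Type*} [AddCommGroup A] [AddCommGroup A']
  {k E : Type*} [Field k] [AddCommGroup E] [Module k E]

/-- The induced multifiltration `Ind_φ(F)^λ E = Σ_{μ : λ ≤ φ(μ)} F^μ E`. -/
def mfInd (C' : AddSubmonoid A') (φ : A →+ A') (F : A → Submodule k E) :
    A' → Submodule k E :=
  fun l => ⨆ (m : A) (_ : φ m - l ∈ C'), F m

/-- The restricted multifiltration `Res^φ(F)^λ E = F^{φ(λ)} E`. -/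
def mfRes (φ : A →+ A') (F : A' → Submodule k E) : A → Submodule k E := fun l => F (φ l)

end IndRes

section Tilde

variable {A : Type*} [AddCommGroup A] (C : AddSubmonoid A)

theorem subset_mfTilde (K : Set A) : K ⊆ mfTilde C K :=
  fun l hl => ⟨l, hl, (sub_self l).symm ▸ C.zero_mem⟩

theorem mfTilde_mono {K L : Set A} (h : K ⊆ L) : mfTilde C K ⊆ mfTilde C L :=
  fun _ ⟨m, hm, hlm⟩ => ⟨m, h hm, hlm⟩

@[simp]
theorem mfTilde_mfTilde (K : Set A) : mfTilde C (mfTilde C K) = mfTilde C K := by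
  refine Set.Subset.antisymm ?_ (subset_mfTilde C _)
  rintro l ⟨m, ⟨n, hn, hmn⟩, hlm⟩
  exact ⟨n, hn, sub_add_sub_cancel l m n ▸ C.add_mem hlm hmn⟩

theorem mfTilde_inter_mfTilde (K₁ K₂ : Set A) :
    mfTilde C (mfTilde C K₁ ∩ mfTilde C K₂) = mfTilde C K₁ ∩ mfTilde C K₂ := by
  refine Set.Subset.antisymm (fun l hl => ⟨?_, ?_⟩) (subset_mfTilde C _)
  · simpa using mfTilde_mono C Set.inter_subset_left hl
  · simpa using mfTilde_mono C Set.inter_subset_right hl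

end Tilde

theorem preimage_mfTilde_image {A A' : Type*} [AddCommGroup A] [AddCommGroup A']
    {C : AddSubmonoid A} {C' : AddSubmonoid A'} {φ : A →+ A'}
    (hC : ∀ a : A, a ∈ C ↔ φ a ∈ C') (K : Set A) :
    φ ⁻¹' mfTilde C' (φ '' K) = mfTilde C K := by
  ext l
  constructor
  · rintro ⟨-, ⟨m, hm, rfl⟩, hlm⟩
    exact ⟨m, hm, (hC _).mpr (by rwa [map_sub])⟩
  · rintro ⟨m, hm, hlm⟩
    exact ⟨φ m, ⟨m, hm, rfl⟩, by simpa only [map_sub] using (hC _).mp hlm⟩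

/-- If `φ` is surjective and `C = φ⁻¹(C')`, then
`φ(K̃₁ ∩ K̃₂)~ = φ(K₁)~ ∩ φ(K₂)~` for all subsets `K₁, K₂ ⊆ A`. -/
theorem tilde_image_inter {A A' : Type*} [AddCommGroup A] [AddCommGroup A']
    (C : AddSubmonoid A) (C' : AddSubmonoid A') (φ : A →+ A')
    (hsurj : Function.Surjective φ) (hC : ∀ a : A, a ∈ C ↔ φ a ∈ C')
    (K₁ K₂ : Set A) :
    mfTilde C' (φ '' (mfTilde C K₁ ∩ mfTilde C K₂)) =
      mfTilde C' (φ '' K₁) ∩ mfTilde C' (φ '' K₂) := by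
  rw [← preimage_mfTilde_image hC K₁, ← preimage_mfTilde_image hC K₂, ← Set.preimage_inter,
    Set.image_preimage_eq _ hsurj, mfTilde_inter_mfTilde]
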